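/- For all a with 0 < a < 1, the function δ₁(a) = (4·sinh((1/2)·arccosh((2 - 2√(1-a²) - a² + 2a⁴)/(2a⁴))) + 2√(1-a²))/π satisfies 2/π < δ₁(a) < 3/π. -/

import Mathlib

/-!
With `s = √(1 - a²) ∈ (0, 1)` the argument of `arcosh` is `1 + 2 t²` for `t = 1 / (2 (1 + s))`,
and `cosh (2 arsinh t) = 1 + 2 t²` gives `sinh (½ arcosh (1 + 2 t²)) = t`. Hence
`π δ₁(a) = 2 / (1 + s) + 2 s`, which lies strictly between `2` and `3` for `0 < s < 1`.
-/

open Real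

/-- The inverse hyperbolic cosine on [1,∞). -/
noncomputable def arcosh (x : ℝ) : ℝ := Real.log (x + Real.sqrt (x^2 - 1))

/-- The density function of type-1 hyp-hor packings in the hyperbolic plane. -/
noncomputable def δ₁ (a : ℝ) : ℝ :=
  (4 * Real.sinh ((1/2) * _root_.arcosh ((2 - 2 * Real.sqrt (1 - a^2) - a^2 + 2 * a^4) / (2 * a^4)))
    + 2 * Real.sqrt (1 - a^2)) / π

theorem arcosh_eq_real_arcosh : _root_.arcosh = Real.arcosh := rfl

theorem Real.sinh_half_mul_arcosh_one_add_two_mul_sq {t : ℝ} (ht : 0 ≤ t) :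
    sinh ((1/2) * Real.arcosh (1 + 2 * t ^ 2)) = t := by
  have hcosh : cosh (2 * arsinh t) = 1 + 2 * t ^ 2 := by
    rw [cosh_two_mul, cosh_sq, sinh_arsinh]
    ring
  rw [← hcosh, arcosh_cosh (by simpa [arsinh_nonneg_iff] using ht), one_div,
    inv_mul_cancel_left₀ two_ne_zero, sinh_arsinh]

theorem delta1_arcosh_arg_eq {a : ℝ} (ha : a ≠ 0) (ha1 : a ^ 2 ≤ 1) :
    (2 - 2 * √(1 - a ^ 2) - a ^ 2 + 2 * a ^ 4) / (2 * a ^ 4) =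
      1 + 2 * (1 / (2 * (1 + √(1 - a ^ 2)))) ^ 2 := by
  set s := √(1 - a ^ 2)
  have hs : s ^ 2 = 1 - a ^ 2 := sq_sqrt (by linarith)
  have hs0 : 0 ≤ s := sqrt_nonneg _
  have hpos : 1 + s ≠ 0 := by positivity
  field_simp
  linear_combination -((1 + s) ^ 2 + a ^ 2 + 1 - s ^ 2) * hs

theorem delta1_eq {a : ℝ} (ha : a ≠ 0) (ha1 : a ^ 2 ≤ 1) :
    δ₁ a = (2 / (1 + √(1 - a ^ 2)) + 2 * √(1 - a ^ 2)) / π := by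
  have hs0 : 0 ≤ √(1 - a ^ 2) := sqrt_nonneg _
  rw [δ₁, delta1_arcosh_arg_eq ha ha1, arcosh_eq_real_arcosh,
    Real.sinh_half_mul_arcosh_one_add_two_mul_sq (by positivity)]
  field_simp
  ring

theorem two_lt_two_div_one_add_add_two_mul {s : ℝ} (hs0 : 0 < s) (hs1 : s < 1) :
    2 < 2 / (1 + s) + 2 * s ∧ 2 / (1 + s) + 2 * s < 3 := by
  have hpos : 0 < 1 + s := by linarith
  constructor
  · rw [← sub_pos]
    have hgap : 2 / (1 + s) + 2 * s - 2 = 2 * s ^ 2 / (1 + s) := by field_simp; ring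
    rw [hgap]
    positivity
  · rw [← sub_pos]
    have hgap : 3 - (2 / (1 + s) + 2 * s) = (1 - s) * (1 + 2 * s) / (1 + s) := by field_simp; ring
    rw [hgap]
    exact div_pos (mul_pos (by linarith) (by linarith)) hpos

/-- For `0 < a < 1` we have `2/π < δ₁ a < 3/π`. -/
theorem delta1_bounds (a : ℝ) (h0 : 0 < a) (h1 : a < 1) :
    2 / π < δ₁ a ∧ δ₁ a < 3 / π := by
  have ha2 : a ^ 2 < 1 := pow_lt_one₀ h0.le h1 two_ne_zero
  have hs0 : 0 < √(1 - a ^ 2) := sqrt_pos.2 (by linarith)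
  have hs1 : √(1 - a ^ 2) < 1 := (sqrt_lt' one_pos).2 (by linarith [pow_pos h0 2])
  obtain ⟨hlow, hup⟩ := two_lt_two_div_one_add_add_two_mul hs0 hs1
  rw [delta1_eq h0.ne' ha2.le]
  exact ⟨div_lt_div_of_pos_right hlow pi_pos, div_lt_div_of_pos_right hup pi_pos⟩
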